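/- arXiv:1210.6831 — 4 statements merged into one kernel-verified Lean document; each statement's English description precedes it below -/
import Mathlib

section
/- Let G be a simple graph, f a coloring of G, and u, v distinct vertices with f(u) = f(v) and d(u,v) <= 2, where d denotes graph distance. Let G' be the simple graph obtained from G by identifying u and v, and let h : G -> G' be the quotient map. Then for every closed walk W' in G' there exists a closed walk W in G such that the image walk h(W) is homologous to W' in G'. (Equivalently, the induced homomorphism h_* : H_1(G) -> H_1(G') on first homology is an epimorphism.) -/
open SimpleGraph

/-- The number of steps of the walk `W` from a vertex labeled `i` to a vertex labeled `j`
(with respect to the labeling `f`). -/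
def colorSteps {V C : Type} [DecidableEq C] {G : SimpleGraph V} (f : V → C)
    {x y : V} (W : G.Walk x y) (i j : C) : ℕ :=
  W.darts.countP fun d => decide (f d.toProd.1 = i ∧ f d.toProd.2 = j)

/-- A coloring `f` of `G` is a null coloring if for every closed walk `W` and every ordered
pair `(i, j)` of distinct colors, the number of steps of `W` from a vertex colored `i` to a
vertex colored `j` equals the number of steps from a vertex colored `j` to one colored `i`. -/
def IsNullColoring {V C : Type} [DecidableEq C] (G : SimpleGraph V) (f : V → C) : Prop :=
  ∀ (x : V) (W : G.Walk x x) (i j : C), i ≠ j → colorSteps f W i j = colorSteps f W j i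

/-- A null coloring is maximal if no null coloring of `G` has more color classes
(the number of color classes of a coloring `g` is `(Set.range g).ncard`). -/
def IsMaximalNullColoring {V C : Type} [DecidableEq C] (G : SimpleGraph V) (f : V → C) : Prop :=
  IsNullColoring G f ∧
    ∀ (D : Type) [DecidableEq D] (g : V → D), IsNullColoring G g →
      (Set.range g).ncard ≤ (Set.range f).ncard

/-- The quotient graph `G/f`: vertices are the color classes of `f` (identified with the
range of `f`), two distinct classes being adjacent iff some edge of `G` joins them. -/
def quotientGraph {V C : Type} (G : SimpleGraph V) (f : V → C) :
    SimpleGraph (Set.range f) where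
  Adj a b := a ≠ b ∧ ∃ x y : V, G.Adj x y ∧ f x = a.1 ∧ f y = b.1
  symm := by
    constructor
    rintro a b ⟨hab, x, y, hxy, hx, hy⟩
    exact ⟨hab.symm, y, x, hxy.symm, hy, hx⟩
  loopless := by constructor; rintro a ⟨h, -⟩; exact h rfl

/-- The graph obtained from `G` by identifying the vertices `u` and `v` (the merged vertex
is represented by `u`; any loops created are discarded). -/
def identify {V : Type} (G : SimpleGraph V) (u v : V) : SimpleGraph {x : V // x ≠ v} where
  Adj a b := a ≠ b ∧ (G.Adj a.1 b.1 ∨ (a.1 = u ∧ G.Adj v b.1) ∨ (b.1 = u ∧ G.Adj a.1 v))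
  symm := by
    constructor
    rintro a b ⟨hab, h⟩
    refine ⟨hab.symm, ?_⟩
    rcases h with h | ⟨ha, hb⟩ | ⟨hb, ha⟩
    · exact Or.inl h.symm
    · exact Or.inr (Or.inr ⟨ha, hb.symm⟩)
    · exact Or.inr (Or.inl ⟨hb, ha.symm⟩)
  loopless := by constructor; rintro a ⟨h, -⟩; exact h rfl

/-- The quotient map `h : G → G'` corresponding to the identification of `u` and `v`. -/
def identifyMap {V : Type} [DecidableEq V] (u v : V) (huv : u ≠ v) : V → {x : V // x ≠ v} :=
  fun x => if hx : x = v then ⟨u, huv⟩ else ⟨x, hx⟩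

/-- The net number of steps of `W` from label `a` to label `b`:  steps from `a` to `b`
minus steps from `b` to `a`. -/
def netCount {V C : Type} [DecidableEq C] {G : SimpleGraph V} (f : V → C)
    {x y : V} (W : G.Walk x y) (a b : C) : ℤ :=
  (colorSteps f W a b : ℤ) - (colorSteps f W b a : ℤ)

/-!
A closed walk of `G'` is a concatenation of edges of `G'`, and net step counts are additive
under concatenation, so it suffices to lift each edge `a' ~ b'` of `G'` to a walk of `G`
with the same net counts. An edge already present in `G` lifts to itself. An edge created by
the identification runs from the merged vertex to a neighbour of `v`, say; it lifts to a
shortest path `P` from `u` to `v` followed by that edge. The image of `P` is a closed walk of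
length at most `2` in `G'`, i.e. empty or a single edge traversed back and forth, so it
contributes no net steps.
-/

section NetCount

variable {V C : Type} [DecidableEq C] {G : SimpleGraph V} (f : V → C)

lemma netCount_nil {x : V} (a b : C) : netCount f (Walk.nil : G.Walk x x) a b = 0 := by
  simp [netCount, colorSteps]

lemma netCount_cons {x y z : V} (h : G.Adj x y) (W : G.Walk y z) (a b : C) :
    netCount f (Walk.cons h W) a b = netCount f W a b +
      ((if f x = a ∧ f y = b then 1 else 0) - (if f x = b ∧ f y = a then 1 else 0)) := by
  simp only [netCount, colorSteps, Walk.darts_cons, List.countP_cons, decide_eq_true_eq]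
  push_cast
  ring

lemma netCount_toWalk {x y : V} (h : G.Adj x y) (a b : C) :
    netCount f h.toWalk a b =
      (if f x = a ∧ f y = b then 1 else 0) - (if f x = b ∧ f y = a then 1 else 0) := by
  rw [Adj.toWalk, netCount_cons, netCount_nil, zero_add]

lemma netCount_append {x y z : V} (W₁ : G.Walk x y) (W₂ : G.Walk y z) (a b : C) :
    netCount f (W₁.append W₂) a b = netCount f W₁ a b + netCount f W₂ a b := by
  simp only [netCount, colorSteps, Walk.darts_append, List.countP_append]
  push_cast
  ring

lemma netCount_eq_zero_of_length_le_two {x y : V} (hxy : f x = f y) (W : G.Walk x y)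
    (hW : W.length ≤ 2) (a b : C) : netCount f W a b = 0 := by
  match W, hW with
  | .nil, _ => exact netCount_nil f a b
  | .cons _ .nil, _ => simp [netCount_cons, netCount_nil, hxy, and_comm]
  | .cons _ (.cons _ .nil), _ =>
    rw [netCount_cons, netCount_cons, netCount_nil, hxy]
    split_ifs <;> grind

lemma exists_walk_netCount_eq_of_adj {V' C' : Type} [DecidableEq C'] {G' : SimpleGraph V'}
    (g : V' → C') (f : V → C') (s : V' → V)
    (hadj : ∀ x y (h : G'.Adj x y), ∃ W : G.Walk (s x) (s y),
      ∀ a b, netCount f W a b = netCount g h.toWalk a b)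
    {x y : V'} (W' : G'.Walk x y) :
    ∃ W : G.Walk (s x) (s y), ∀ a b, netCount f W a b = netCount g W' a b := by
  induction W' with
  | nil => exact ⟨.nil, fun a b => by rw [netCount_nil, netCount_nil]⟩
  | @cons x y z h W' ih =>
    obtain ⟨E, hE⟩ := hadj x y h
    obtain ⟨W, hW⟩ := ih
    refine ⟨E.append W, fun a b => ?_⟩
    rw [← Walk.cons_nil_append, netCount_append, netCount_append, hE, hW, Adj.toWalk]

end NetCount

section Identify

variable {V : Type} [DecidableEq V] {u v : V} (huv : u ≠ v)

lemma identifyMap_val (z : {x : V // x ≠ v}) : identifyMap u v huv z.1 = z :=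
  dif_neg z.2

lemma identifyMap_right : identifyMap u v huv v = ⟨u, huv⟩ :=
  dif_pos rfl

lemma identifyMap_left_eq_right : identifyMap u v huv u = identifyMap u v huv v := by
  rw [identifyMap_val huv ⟨u, huv⟩, identifyMap_right]

lemma exists_walk_netCount_identifyMap_eq_of_adj {G : SimpleGraph V} (P : G.Walk u v)
    (hP : P.length ≤ 2) (x y : {x : V // x ≠ v}) (h : (identify G u v).Adj x y) :
    ∃ W : G.Walk x.1 y.1, ∀ a b,
      netCount (identifyMap u v huv) W a b = netCount id h.toWalk a b := by
  have hP₀ := netCount_eq_zero_of_length_le_two _ (identifyMap_left_eq_right huv) P hP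
  have hP₀' := netCount_eq_zero_of_length_le_two _ (identifyMap_left_eq_right huv).symm
    P.reverse (P.length_reverse ▸ hP)
  suffices ∃ W : G.Walk x.1 y.1, ∀ a b, netCount (identifyMap u v huv) W a b =
      (if x = a ∧ y = b then 1 else 0) - (if x = b ∧ y = a then 1 else 0) by
    simpa only [netCount_toWalk, id] using this
  obtain ⟨-, hxy | ⟨hxu, hvy⟩ | ⟨hyu, hxv⟩⟩ := h
  · refine ⟨hxy.toWalk, fun a b => ?_⟩
    rw [netCount_toWalk, identifyMap_val, identifyMap_val]
  · obtain rfl : x = ⟨u, huv⟩ := Subtype.ext hxu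
    refine ⟨P.append hvy.toWalk, fun a b => ?_⟩
    rw [netCount_append, hP₀, zero_add, netCount_toWalk, identifyMap_right, identifyMap_val]
  · obtain rfl : y = ⟨u, huv⟩ := Subtype.ext hyu
    refine ⟨hxv.toWalk.append P.reverse, fun a b => ?_⟩
    rw [netCount_append, hP₀', add_zero, netCount_toWalk, identifyMap_right, identifyMap_val]

end Identify

theorem identify_homology_epi_general
    {V : Type} [DecidableEq V]
    (G : SimpleGraph V) (u v : V) (huv : u ≠ v)
    (hreach : G.Reachable u v) (hdist : G.dist u v ≤ 2) :
    ∀ (x' : {x : V // x ≠ v}) (W' : (identify G u v).Walk x' x'),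
      ∃ (x : V) (W : G.Walk x x),
        ∀ a b : {x : V // x ≠ v}, (identify G u v).Adj a b →
          netCount (identifyMap u v huv) W a b = netCount id W' a b := by
  intro x' W'
  obtain ⟨P, hP⟩ := hreach.exists_walk_length_eq_dist
  obtain ⟨W, hW⟩ := exists_walk_netCount_eq_of_adj id (identifyMap u v huv) Subtype.val
    (exists_walk_netCount_identifyMap_eq_of_adj huv P (hP ▸ hdist)) W'
  exact ⟨x'.1, W, fun a b _ => hW a b⟩

/-- If `f(u) = f(v)` and `d(u,v) ≤ 2`, then the induced map
`h₁ : H₁(G) → H₁(G')` is an epimorphism: for every closed walk `W'` of `G'` there is a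
closed walk `W` of `G` whose image `h(W)` is homologous to `W'` in `G'`
(net step counts agree on every ordered pair of adjacent vertices of `G'`). -/
theorem identify_homology_epi
    {V C : Type} [Fintype V] [DecidableEq V] [DecidableEq C]
    (G : SimpleGraph V) (f : V → C) (u v : V) (huv : u ≠ v)
    (hfuv : f u = f v) (hreach : G.Reachable u v) (hdist : G.dist u v ≤ 2) :
    ∀ (x' : {x : V // x ≠ v}) (W' : (identify G u v).Walk x' x'),
      ∃ (x : V) (W : G.Walk x x),
        ∀ a b : {x : V // x ≠ v}, (identify G u v).Adj a b →
          netCount (identifyMap u v huv) W a b = netCount id W' a b :=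
  identify_homology_epi_general G u v huv hreach hdist
end

section
/- Let f be a maximal null coloring of a simple graph G. If any two distinct vertices u, v of G with the same color satisfy d(u,v) >= 2 (i.e., no edge of G is monochromatic), then G is a bipartite graph. -/
open SimpleGraph

/-! Null colorings have swap-symmetric color-pair sequences, and a swap-symmetric sequence of
off-diagonal pairs has even length: fixing any linear order on the colors, swapping matches the
steps with `p.1 < p.2` one-to-one with those with `p.2 < p.1`. With no monochromatic edge every
step is off-diagonal, so every closed walk has even length, and `G` is bipartite. -/

theorem List.even_length_of_perm_map_swap {α : Type*} {l : List (α × α)}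
    (hswap : (l.map Prod.swap).Perm l) (hdiag : ∀ p ∈ l, p.1 ≠ p.2) : Even l.length := by
  let _ : LinearOrder α := IsWellOrder.linearOrder WellOrderingRel
  have hlt_gt : l.countP (fun p => p.2 < p.1) = l.countP (fun p => p.1 < p.2) := by
    rw [← hswap.countP_eq, List.countP_map]
    rfl
  have hnot_lt : l.countP (fun p => ¬ p.1 < p.2) = l.countP (fun p => p.2 < p.1) :=
    List.countP_congr fun p hp => by simpa using (hdiag p hp).symm.le_iff_lt
  rw [List.length_eq_countP_add_countP (fun p => decide (p.1 < p.2))]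
  simp only [decide_eq_true_eq, hnot_lt, hlt_gt]
  exact ⟨_, rfl⟩

def colorPairs {V C : Type} {G : SimpleGraph V} (f : V → C) {x y : V} (W : G.Walk x y) :
    List (C × C) :=
  W.darts.map fun d => (f d.fst, f d.snd)

lemma colorSteps_eq_count_colorPairs {V C : Type} [DecidableEq C] {G : SimpleGraph V}
    (f : V → C) {x y : V} (W : G.Walk x y) (i j : C) :
    colorSteps f W i j = (colorPairs f W).count (i, j) := by
  rw [colorSteps, colorPairs, List.count_eq_countP, List.countP_map]
  exact List.countP_congr fun d _ => by simp

lemma IsNullColoring.perm_map_swap_colorPairs {V C : Type} [DecidableEq C] {G : SimpleGraph V}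
    {f : V → C} (hf : IsNullColoring G f) {x : V} (W : G.Walk x x) :
    ((colorPairs f W).map Prod.swap).Perm (colorPairs f W) := by
  refine List.perm_iff_count.2 fun ⟨i, j⟩ => ?_
  rw [← Prod.swap_swap (i, j), List.count_map_of_injective _ _ Prod.swap_injective]
  rcases eq_or_ne i j with rfl | hij
  · rfl
  · simpa [colorSteps_eq_count_colorPairs] using hf x W j i hij.symm

lemma IsNullColoring.even_length_of_walk {V C : Type} [DecidableEq C] {G : SimpleGraph V}
    {f : V → C} (hf : IsNullColoring G f) (hmono : ∀ x y : V, G.Adj x y → f x ≠ f y)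
    {x : V} (W : G.Walk x x) : Even W.length := by
  have hdiag : ∀ p ∈ colorPairs f W, p.1 ≠ p.2 := by
    simp only [colorPairs, List.mem_map]
    rintro _ ⟨d, -, rfl⟩
    exact hmono _ _ d.adj
  simpa [colorPairs] using List.even_length_of_perm_map_swap (hf.perm_map_swap_colorPairs W) hdiag

theorem maximal_null_coloring_no_mono_edge_bipartite_general
    {V C : Type} [DecidableEq C]
    (G : SimpleGraph V) (f : V → C) (hf : IsMaximalNullColoring G f)
    (hmono : ∀ x y : V, G.Adj x y → f x ≠ f y) :
    G.Colorable 2 :=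
  two_colorable_iff_forall_loop_even.2 fun _ W => hf.1.even_length_of_walk hmono W

/-- If `f` is a maximal null coloring of `G` and no edge of `G` is
monochromatic (any two distinct vertices with the same color are at distance ≥ 2),
then `G` is bipartite, i.e. properly 2-colorable. -/
theorem maximal_null_coloring_no_mono_edge_bipartite
    {V C : Type} [Fintype V] [DecidableEq C]
    (G : SimpleGraph V) (f : V → C) (hf : IsMaximalNullColoring G f)
    (hmono : ∀ x y : V, G.Adj x y → f x ≠ f y) :
    G.Colorable 2 :=
  maximal_null_coloring_no_mono_edge_bipartite_general G f hf hmono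
end

section
/- Let G and G' be simple graphs and h : V(G) -> V(G') a map such that for every edge xy of G either h(x) = h(y) or h(x)h(y) is an edge of G'. If g' is a null coloring of G', then the composition g = g' composed with h is a null coloring of G. -/
open SimpleGraph

/-! Contract every edge of `G` that `h` sends to a single vertex: a closed walk `W` in `G` becomes
a closed walk in `G'` whose steps are exactly the images of the non-contracted steps of `W`. The
contracted steps join two vertices of the same colour under `g' ∘ h`, so they do not contribute to
any count between distinct colours, and these counts are the same for `W` and its image. -/

section colorSteps

variable {V C : Type} [DecidableEq C] {G : SimpleGraph V} (f : V → C)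

@[simp]
lemma colorSteps_cons {x y z : V} (a : G.Adj x y) (p : G.Walk y z) (i j : C) :
    colorSteps f (Walk.cons a p) i j =
      colorSteps f p i j + if f x = i ∧ f y = j then 1 else 0 := by
  simp [colorSteps, List.countP_cons]

@[simp]
lemma colorSteps_copy {x y x' y' : V} (p : G.Walk x y) (hx : x = x') (hy : y = y') (i j : C) :
    colorSteps f (p.copy hx hy) i j = colorSteps f p i j := by
  subst hx hy
  rfl

end colorSteps

namespace SimpleGraph.Walk

variable {V V' : Type} [DecidableEq V'] {G : SimpleGraph V} {G' : SimpleGraph V'} (h : V → V')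
  (hh : ∀ x y : V, G.Adj x y → h x = h y ∨ G'.Adj (h x) (h y))

def collapse : ∀ {x y : V}, G.Walk x y → G'.Walk (h x) (h y)
  | _, _, nil => nil
  | x, _, cons (v := z) a p =>
    if hxz : h x = h z then (p.collapse).copy hxz.symm rfl
    else cons ((hh x z a).resolve_left hxz) p.collapse

lemma colorSteps_collapse {C : Type} [DecidableEq C] (g : V' → C) {x y : V} (W : G.Walk x y)
    {i j : C} (hij : i ≠ j) :
    colorSteps g (W.collapse h hh) i j = colorSteps (g ∘ h) W i j := by
  induction W with
  | nil => rfl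
  | @cons x z y a p ih =>
    by_cases hxz : h x = h z
    · suffices g (h z) = i → g (h z) ≠ j by simpa [collapse, hxz, ih]
      rintro rfl
      exact hij
    · simp [collapse, hxz, ih]

end SimpleGraph.Walk

/-- If `h : V(G) → V(G')` sends every edge of `G` either to a single vertex or
to an edge of `G'`, and `g'` is a null coloring of `G'`, then `g' ∘ h` is a null coloring
of `G`. -/
theorem null_coloring_comp
    {V V' C : Type} [DecidableEq C]
    (G : SimpleGraph V) (G' : SimpleGraph V') (h : V → V')
    (hhom : ∀ x y : V, G.Adj x y → h x = h y ∨ G'.Adj (h x) (h y))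
    (g' : V' → C) (hg' : IsNullColoring G' g') :
    IsNullColoring G (g' ∘ h) := by
  classical
  intro x W i j hij
  rw [← W.colorSteps_collapse h hhom g' hij, ← W.colorSteps_collapse h hhom g' hij.symm]
  exact hg' (h x) (W.collapse h hhom) i j hij
end

section
/- Let G be a simple graph and I a proper subset of V(G) that is an independent set (no edge of G has both endpoints in I). Then the coloring of G that assigns a distinct color to each vertex of I and one further common color to all vertices of V(G) \ I is a null coloring of G, and it has |I| + 1 color classes. -/
open SimpleGraph

/-!
In a closed walk every vertex is entered as often as it is left, so for each color `j` the
darts starting in class `j` are as many as those ending there. If every edge between two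
different color classes touches one fixed class `c`, then a dart leaving class `j ≠ c` stays
in `j` or goes to `c`, and a dart entering `j` comes from `j` or from `c`; the balance of
entries and exits therefore says that `W` steps from `j` to `c` as often as from `c` to `j`,
while steps between two classes other than `c` do not occur at all. Coloring an independent
set `I` vertex by vertex and its complement by one further color is such a coloring.
-/

theorem List.countP_eq_countP_and_add_countP_and_not {α : Type*} (p q : α → Bool)
    (l : List α) :
    l.countP p = l.countP (fun a => p a && q a) + l.countP (fun a => p a && !q a) := by
  induction l with
  | nil => rfl
  | cons a l ih =>
    simp only [List.countP_cons, ih]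
    cases p a <;> cases q a <;> simp only [Bool.true_and, Bool.false_and, Bool.not_true,
      Bool.not_false, Bool.false_eq_true, if_true, if_false] <;> omega

theorem SimpleGraph.Walk.map_fst_darts_perm_map_snd_darts {V : Type*} {G : SimpleGraph V}
    {x : V} (W : G.Walk x x) : (W.darts.map (·.fst)).Perm (W.darts.map (·.snd)) :=
  List.perm_cons x |>.mp <| (List.perm_append_singleton x _).symm.trans <| by
    rw [W.map_fst_darts_append, W.cons_map_snd_darts]

theorem SimpleGraph.Walk.countP_darts_fst_eq_countP_darts_snd {V : Type*} {G : SimpleGraph V}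
    {x : V} (W : G.Walk x x) (p : V → Bool) :
    W.darts.countP (fun d => p d.fst) = W.darts.countP (fun d => p d.snd) := by
  simpa only [List.countP_map, Function.comp_def] using
    W.map_fst_darts_perm_map_snd_darts.countP_eq p

section StarColoring

variable {V C : Type} [DecidableEq C] {G : SimpleGraph V} {f : V → C} {c : C}

theorem colorSteps_eq_zero_of_ne_center
    (hstar : ∀ x y, G.Adj x y → f x ≠ f y → f x = c ∨ f y = c)
    {x y : V} (W : G.Walk x y) {i j : C} (hij : i ≠ j) (hic : i ≠ c) (hjc : j ≠ c) :
    colorSteps f W i j = 0 :=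
  List.countP_eq_zero.mpr fun d _ hd => by
    obtain ⟨hi, hj⟩ := of_decide_eq_true hd
    rcases hstar _ _ d.adj (hi ▸ hj ▸ hij) with h | h
    exacts [hic (hi ▸ h), hjc (hj ▸ h)]

theorem countP_darts_fst_eq_colorSteps_add
    (hstar : ∀ x y, G.Adj x y → f x ≠ f y → f x = c ∨ f y = c)
    {x y : V} (W : G.Walk x y) {j : C} (hjc : j ≠ c) :
    W.darts.countP (fun d => f d.fst = j) = colorSteps f W j j + colorSteps f W j c := by
  rw [List.countP_eq_countP_and_add_countP_and_not _ (fun d => f d.snd = j)]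
  congr 1 <;> refine List.countP_congr fun d _ => ?_
  · simp only [Bool.and_eq_true, decide_eq_true_eq]
  · simp only [Bool.and_eq_true, Bool.not_eq_true', decide_eq_true_eq, decide_eq_false_iff_not]
    refine and_congr_right fun hd => ⟨fun hne => ?_, fun hd' => hd' ▸ hjc.symm⟩
    exact (hstar _ _ d.adj (hd ▸ Ne.symm hne)).resolve_left (hd ▸ hjc)

theorem countP_darts_snd_eq_colorSteps_add
    (hstar : ∀ x y, G.Adj x y → f x ≠ f y → f x = c ∨ f y = c)
    {x y : V} (W : G.Walk x y) {j : C} (hjc : j ≠ c) :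
    W.darts.countP (fun d => f d.snd = j) = colorSteps f W j j + colorSteps f W c j := by
  rw [List.countP_eq_countP_and_add_countP_and_not _ (fun d => f d.fst = j)]
  congr 1 <;> refine List.countP_congr fun d _ => ?_
  · simp only [Bool.and_eq_true, decide_eq_true_eq, and_comm]
  · simp only [Bool.and_eq_true, Bool.not_eq_true', decide_eq_true_eq, decide_eq_false_iff_not]
    refine and_comm.trans <| and_congr_left fun hd => ⟨fun hne => ?_, fun hd' => hd' ▸ hjc.symm⟩
    exact (hstar _ _ d.adj (hd ▸ hne)).resolve_right (hd ▸ hjc)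

theorem colorSteps_to_center_eq_colorSteps_from_center
    (hstar : ∀ x y, G.Adj x y → f x ≠ f y → f x = c ∨ f y = c)
    {x : V} (W : G.Walk x x) {j : C} (hjc : j ≠ c) :
    colorSteps f W j c = colorSteps f W c j := by
  have := W.countP_darts_fst_eq_countP_darts_snd (fun v => f v = j)
  rw [countP_darts_fst_eq_colorSteps_add hstar W hjc,
    countP_darts_snd_eq_colorSteps_add hstar W hjc] at this
  omega

theorem isNullColoring_of_star
    (hstar : ∀ x y, G.Adj x y → f x ≠ f y → f x = c ∨ f y = c) : IsNullColoring G f := by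
  intro x W i j hij
  by_cases hic : i = c
  · subst hic
    exact (colorSteps_to_center_eq_colorSteps_from_center hstar W (Ne.symm hij)).symm
  by_cases hjc : j = c
  · subst hjc
    exact colorSteps_to_center_eq_colorSteps_from_center hstar W hic
  rw [colorSteps_eq_zero_of_ne_center hstar W hij hic hjc,
    colorSteps_eq_zero_of_ne_center hstar W (Ne.symm hij) hjc hic]

end StarColoring

section IsolatingColoring

variable {V : Type} (I : Set V) [DecidablePred (· ∈ I)]

def isolatingColoring (x : V) : Option I :=
  if hx : x ∈ I then some ⟨x, hx⟩ else none

variable {I}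

theorem isolatingColoring_eq_none_iff {x : V} : isolatingColoring I x = none ↔ x ∉ I := by
  by_cases hx : x ∈ I <;> simp [isolatingColoring, hx]

theorem isolatingColoring_eq_none_or_of_adj {G : SimpleGraph V}
    (hind : ∀ x ∈ I, ∀ y ∈ I, ¬ G.Adj x y) {x y : V} (hxy : G.Adj x y) :
    isolatingColoring I x = none ∨ isolatingColoring I y = none := by
  simp only [isolatingColoring_eq_none_iff, ← not_and_or]
  exact fun ⟨hx, hy⟩ => hind x hx y hy hxy

theorem range_isolatingColoring (hI : I ≠ Set.univ) :
    Set.range (isolatingColoring I) = Set.univ := by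
  refine Set.eq_univ_of_forall fun
    | none => ?_
    | some a => ⟨a, by simp [isolatingColoring]⟩
  obtain ⟨x, hx⟩ := (Set.ne_univ_iff_exists_notMem I).mp hI
  exact ⟨x, isolatingColoring_eq_none_iff.mpr hx⟩

end IsolatingColoring

/-- If `I` is an independent set which is a proper subset of `V(G)`, then the
coloring assigning a distinct color to each vertex of `I` and one further common color to
all remaining vertices is a null coloring of `G` with `|I| + 1` color classes. -/
theorem independent_set_distinct_colors_null
    {V : Type} [Fintype V] [DecidableEq V]
    (G : SimpleGraph V) (I : Set V) [DecidablePred (· ∈ I)]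
    (hproper : I ≠ Set.univ)
    (hind : ∀ x ∈ I, ∀ y ∈ I, ¬ G.Adj x y) :
    IsNullColoring G (fun x => if hx : x ∈ I then (some ⟨x, hx⟩ : Option I) else none) ∧
    (Set.range (fun x => if hx : x ∈ I then (some ⟨x, hx⟩ : Option I) else none)).ncard
      = I.ncard + 1 := by
  change IsNullColoring G (isolatingColoring I) ∧
    (Set.range (isolatingColoring I)).ncard = I.ncard + 1
  refine ⟨isNullColoring_of_star fun _ _ hxy _ => isolatingColoring_eq_none_or_of_adj hind hxy, ?_⟩
  rw [range_isolatingColoring hproper, Set.ncard_univ, Finite.card_option, Nat.card_coe_set_eq]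
end
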